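/- Suppose the empirical measures P_n = (1/n) Σ_{i=1}^n δ_{(t_i, y_i)} converge weakly to a Borel probability measure P on I × ℝ, that ∫ y² P_n(d(t,y)) → ∫ y² P(d(t,y)) < ∞, and that λ_n ≥ 0 with λ_n → 0. Then for every fixed ν ∈ H, (1/n) Σ_{i=1}^n (y_i − ⟨η_{t_i}, ν⟩)² + λ_n ‖χ1 ν‖² → ∫_{I×ℝ} (y − ⟨η_t, ν⟩)² P(d(t,y)); in particular the constant sequence ν^n = ν is a recovery sequence for the Γ-limit. -/

import Mathlib

/-!
Expand `(y - ⟪η t, ν⟫)² = y² - 2 y ⟪η t, ν⟫ + ⟪η t, ν⟫²`. The averages of `y²` converge by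
assumption and those of the bounded continuous `⟪η t, ν⟫²` by weak convergence. The cross term
is unbounded in `y`, but truncating `y` at height `M` changes it by at most `α ‖ν‖ y² / M`, which
is uniformly small in `n` because the second moments converge. The penalty `λ n ‖χ1 ν‖²` tends
to `0`.
-/

open MeasureTheory Filter
open scoped RealInnerProductSpace

lemma tendsto_of_forall_approx {α E : Type*} [PseudoMetricSpace E] {f : Filter α}
    {u : α → E} {l : E}
    (h : ∀ ε > 0, ∃ v : α → E, ∃ m : E,
      Tendsto v f (nhds m) ∧ (∀ᶠ a in f, dist (u a) (v a) ≤ ε) ∧ dist m l ≤ ε) :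
    Tendsto u f (nhds l) := by
  refine Metric.tendsto_nhds.2 fun ε hε => ?_
  obtain ⟨v, m, hv, huv, hml⟩ := h (ε / 4) (by positivity)
  filter_upwards [huv, Metric.tendsto_nhds.1 hv (ε / 4) (by positivity)] with a hua hva
  calc dist (u a) l ≤ dist (u a) (v a) + dist (v a) m + dist m l := dist_triangle4 _ _ _ _
    _ < ε := by linarith

lemma abs_sub_max_min_le_sq_div {M : ℝ} (hM : 0 < M) (w : ℝ) :
    |w - max (-M) (min M w)| ≤ w ^ 2 / M := by
  rw [le_div_iff₀ hM]
  rcases le_total w (-M) with h | h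
  · rw [min_eq_right (by linarith), max_eq_left h, abs_of_nonpos (by linarith)]
    nlinarith
  rcases le_total M w with h' | h'
  · rw [min_eq_left h', max_eq_right (by linarith), abs_of_nonneg (by linarith)]
    nlinarith
  · rw [min_eq_right h', max_eq_right h, sub_self, abs_zero, zero_mul]
    positivity

section EmpiricalMean

variable {Z : Type*}

noncomputable def empiricalMean (s : ℕ → Z) (f : Z → ℝ) (n : ℕ) : ℝ :=
  (1 / (n : ℝ)) * ∑ i ∈ Finset.range n, f (s i)

variable {s : ℕ → Z} {f₁ f₂ : Z → ℝ}

lemma empiricalMean_add (n : ℕ) :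
    empiricalMean s (fun z => f₁ z + f₂ z) n = empiricalMean s f₁ n + empiricalMean s f₂ n := by
  simp only [empiricalMean, Finset.sum_add_distrib, mul_add]

lemma empiricalMean_sub (n : ℕ) :
    empiricalMean s (fun z => f₁ z - f₂ z) n = empiricalMean s f₁ n - empiricalMean s f₂ n := by
  simp only [empiricalMean, Finset.sum_sub_distrib, mul_sub]

lemma empiricalMean_const_mul (c : ℝ) (n : ℕ) :
    empiricalMean s (fun z => c * f₁ z) n = c * empiricalMean s f₁ n := by
  simp only [empiricalMean, ← Finset.mul_sum]
  ring

lemma abs_empiricalMean_sub_le {b : Z → ℝ} (h : ∀ z, |f₁ z - f₂ z| ≤ b z) (n : ℕ) :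
    |empiricalMean s f₁ n - empiricalMean s f₂ n| ≤ empiricalMean s b n := by
  rw [← empiricalMean_sub]
  unfold empiricalMean
  rw [abs_mul, abs_of_nonneg (by positivity)]
  gcongr
  exact (Finset.abs_sum_le_sum_abs _ _).trans (Finset.sum_le_sum fun i _ => h (s i))

variable [TopologicalSpace Z] [MeasurableSpace Z] [OpensMeasurableSpace Z]
  {P : Measure Z} [IsFiniteMeasure P] {w : Z → ℝ}

lemma integrable_mul_of_integrable_sq (g : BoundedContinuousFunction Z ℝ)
    (hw : AEStronglyMeasurable w P) (hw2 : Integrable (fun z => w z ^ 2) P) :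
    Integrable (fun z => g z * w z) P :=
  ((memLp_two_iff_integrable_sq hw).2 hw2 |>.integrable one_le_two).bdd_mul
    g.continuous.aestronglyMeasurable (ae_of_all _ g.norm_coe_le_norm)

lemma tendsto_empiricalMean_mul
    (hweak : ∀ h : BoundedContinuousFunction Z ℝ,
      Tendsto (empiricalMean s h) atTop (nhds (∫ z, h z ∂P)))
    (hw : Continuous w) (hw2 : Integrable (fun z => w z ^ 2) P)
    (hw2lim : Tendsto (empiricalMean s fun z => w z ^ 2) atTop (nhds (∫ z, w z ^ 2 ∂P)))
    (g : BoundedContinuousFunction Z ℝ) :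
    Tendsto (empiricalMean s fun z => g z * w z) atTop (nhds (∫ z, g z * w z ∂P)) := by
  set J := ∫ z, w z ^ 2 ∂P
  have hJ : 0 ≤ J := integral_nonneg fun z => sq_nonneg _
  have hgw := integrable_mul_of_integrable_sq g hw.aestronglyMeasurable hw2
  refine tendsto_of_forall_approx fun ε hε => ?_
  set M := ‖g‖ * (J + 1) / ε + 1
  have hM : 0 < M := by positivity
  have hMε : ‖g‖ / M * (J + 1) ≤ ε := by
    rw [div_mul_eq_mul_div, div_le_iff₀ hM]
    simp only [M, mul_add, mul_div_cancel₀ _ hε.ne', mul_one]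
    linarith
  let wM : BoundedContinuousFunction Z ℝ :=
    .ofNormedAddCommGroup (fun z => max (-M) (min M (w z)))
      (continuous_const.max (continuous_const.min hw)) M
      fun z => abs_le.2 ⟨le_max_left _ _, max_le (by linarith) (min_le_left _ _)⟩
  have htrunc : ∀ z, |g z * w z - (g * wM) z| ≤ ‖g‖ / M * w z ^ 2 := fun z => by
    rw [BoundedContinuousFunction.coe_mul, Pi.mul_apply, ← mul_sub, abs_mul, div_mul_comm,
      mul_comm]
    exact mul_le_mul (abs_sub_max_min_le_sq_div hM _) (g.norm_coe_le_norm z) (abs_nonneg _)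
      (by positivity)
  refine ⟨empiricalMean s (g * wM), ∫ z, (g * wM) z ∂P, hweak _, ?_, ?_⟩
  · filter_upwards [hw2lim.eventually_le_const (by linarith : J < J + 1)] with n hn
    calc dist (empiricalMean s (fun z => g z * w z) n) (empiricalMean s (g * wM) n)
        ≤ empiricalMean s (fun z => ‖g‖ / M * w z ^ 2) n := abs_empiricalMean_sub_le htrunc n
      _ = ‖g‖ / M * empiricalMean s (fun z => w z ^ 2) n := empiricalMean_const_mul _ n
      _ ≤ ε := by grw [hn]; exact hMε
  · rw [dist_comm, Real.dist_eq, ← integral_sub hgw ((g * wM).integrable P)]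
    calc ‖∫ z, (g z * w z - (g * wM) z) ∂P‖ ≤ ∫ z, ‖g‖ / M * w z ^ 2 ∂P :=
          norm_integral_le_of_norm_le (hw2.const_mul _) (ae_of_all _ htrunc)
      _ = ‖g‖ / M * J := integral_const_mul _ _
      _ ≤ ε := hMε.trans' (by gcongr; linarith)

lemma tendsto_empiricalMean_sub_sq
    (hweak : ∀ h : BoundedContinuousFunction Z ℝ,
      Tendsto (empiricalMean s h) atTop (nhds (∫ z, h z ∂P)))
    (hw : Continuous w) (hw2 : Integrable (fun z => w z ^ 2) P)
    (hw2lim : Tendsto (empiricalMean s fun z => w z ^ 2) atTop (nhds (∫ z, w z ^ 2 ∂P)))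
    (g : BoundedContinuousFunction Z ℝ) :
    Tendsto (empiricalMean s fun z => (w z - g z) ^ 2) atTop
      (nhds (∫ z, (w z - g z) ^ 2 ∂P)) := by
  have hexpand : (fun z => (w z - g z) ^ 2) = fun z => w z ^ 2 - 2 * (g z * w z) + (g * g) z := by
    ext z
    rw [BoundedContinuousFunction.coe_mul, Pi.mul_apply]
    ring
  have hgw := tendsto_empiricalMean_mul hweak hw hw2 hw2lim g
  have hgw_int := (integrable_mul_of_integrable_sq g hw.aestronglyMeasurable hw2).const_mul 2
  rw [hexpand, integral_add (f := fun z => w z ^ 2 - 2 * (g z * w z)) (hw2.sub hgw_int)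
    ((g * g).integrable P), integral_sub hw2 hgw_int, integral_const_mul]
  convert (hw2lim.sub (hgw.const_mul 2)).add (hweak (g * g)) using 1
  ext n
  rw [empiricalMean_add, empiricalMean_sub, empiricalMean_const_mul]

end EmpiricalMean

theorem gamma_recovery_sequence_general
    {H : Type*} [NormedAddCommGroup H] [InnerProductSpace ℝ H]
    (H1 : Submodule ℝ H) [H1.HasOrthogonalProjection]
    {d : ℕ} (I : Set (EuclideanSpace ℝ (Fin d)))
    (η : I → H) (α : ℝ) (hηbd : ∀ s : I, ‖η s‖ ≤ α) (hηcont : Continuous η)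
    (t : ℕ → I) (y : ℕ → ℝ)
    (lam : ℕ → ℝ) (hlam0 : Tendsto lam atTop (nhds 0))
    (P : Measure (I × ℝ)) [IsProbabilityMeasure P]
    (hweak : ∀ h : BoundedContinuousFunction (I × ℝ) ℝ,
      Tendsto (fun n : ℕ => (1 / (n : ℝ)) * ∑ i ∈ Finset.range n, h (t i, y i))
        atTop (nhds (∫ z, h z ∂P)))
    (hyL2 : Integrable (fun z : I × ℝ => z.2 ^ 2) P)
    (hy2 : Tendsto (fun n : ℕ => (1 / (n : ℝ)) * ∑ i ∈ Finset.range n, (y i) ^ 2)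
      atTop (nhds (∫ z : I × ℝ, z.2 ^ 2 ∂P)))
    (ν : H) :
    Tendsto (fun n : ℕ =>
        (1 / (n : ℝ)) * ∑ i ∈ Finset.range n, (y i - ⟪η (t i), ν⟫) ^ 2
          + lam n * ‖(H1.orthogonalProjectionOnto ν : H)‖ ^ 2)
      atTop (nhds (∫ z : I × ℝ, (z.2 - ⟪η z.1, ν⟫) ^ 2 ∂P)) := by
  let g : BoundedContinuousFunction (I × ℝ) ℝ :=
    .ofNormedAddCommGroup (fun z => ⟪η z.1, ν⟫)
      ((hηcont.comp continuous_fst).inner continuous_const) (α * ‖ν‖)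
      fun z => (norm_inner_le_norm _ _).trans (by gcongr; exact hηbd z.1)
  have hfit := tendsto_empiricalMean_sub_sq (s := fun i => (t i, y i)) hweak continuous_snd hyL2
    hy2 g
  have hpenalty : Tendsto (fun n => lam n * ‖(H1.orthogonalProjectionOnto ν : H)‖ ^ 2) atTop
      (nhds 0) := by
    simpa using hlam0.mul_const (‖(H1.orthogonalProjectionOnto ν : H)‖ ^ 2)
  rw [← add_zero (∫ z : I × ℝ, _ ∂P)]
  exact hfit.add hpenalty

/-- **recovery sequence.** Let `H` be a real Hilbert space with orthogonal
projection `χ1` onto a closed subspace, `I ⊆ ℝ^d`, `η : I → H` continuous with `‖η t‖ ≤ α`,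
and `(t i, y i)` a sequence in `I × ℝ` whose empirical measures converge weakly to the Borel
probability measure `P`, with convergence of second moments
`(1/n) ∑_{i<n} (y i)² → ∫ y² dP < ∞`. If `λ n ≥ 0` and `λ n → 0`, then for every fixed
`ν ∈ H`,
`(1/n) ∑_{i<n} (y i − ⟪η (t i), ν⟫)² + λ n ‖χ1 ν‖² → ∫ (y − ⟪η t, ν⟫)² dP`;
in particular the constant sequence is a recovery sequence for the Γ-limit. -/
theorem gamma_recovery_sequence
    {H : Type*} [NormedAddCommGroup H] [InnerProductSpace ℝ H]
    (H1 : Submodule ℝ H) [H1.HasOrthogonalProjection]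
    {d : ℕ} (I : Set (EuclideanSpace ℝ (Fin d)))
    (η : I → H) (α : ℝ) (hηbd : ∀ s : I, ‖η s‖ ≤ α) (hηcont : Continuous η)
    (t : ℕ → I) (y : ℕ → ℝ)
    (lam : ℕ → ℝ) (hlam : ∀ n, 0 ≤ lam n) (hlam0 : Tendsto lam atTop (nhds 0))
    (P : Measure (I × ℝ)) [IsProbabilityMeasure P]
    (hweak : ∀ h : BoundedContinuousFunction (I × ℝ) ℝ,
      Tendsto (fun n : ℕ => (1 / (n : ℝ)) * ∑ i ∈ Finset.range n, h (t i, y i))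
        atTop (nhds (∫ z, h z ∂P)))
    (hyL2 : Integrable (fun z : I × ℝ => z.2 ^ 2) P)
    (hy2 : Tendsto (fun n : ℕ => (1 / (n : ℝ)) * ∑ i ∈ Finset.range n, (y i) ^ 2)
      atTop (nhds (∫ z : I × ℝ, z.2 ^ 2 ∂P)))
    (ν : H) :
    Tendsto (fun n : ℕ =>
        (1 / (n : ℝ)) * ∑ i ∈ Finset.range n, (y i - ⟪η (t i), ν⟫) ^ 2
          + lam n * ‖(H1.orthogonalProjectionOnto ν : H)‖ ^ 2)
      atTop (nhds (∫ z : I × ℝ, (z.2 - ⟪η z.1, ν⟫) ^ 2 ∂P)) :=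
  gamma_recovery_sequence_general H1 I η α hηbd hηcont t y lam hlam0 P hweak hyL2 hy2 ν
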